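/- arXiv:1910.09148 — 5 statements merged into one kernel-verified Lean document; each statement's English description precedes it below -/
import Mathlib

section
/- Let V be a variety with 0⃗ and 1⃗ having Boolean factor congruences (BFC), and let A ∈ V. The map g: Z(A) → FC(A) defined by g(e⃗) = θ_{0,e} is a bijection, and its inverse h: FC(A) → Z(A) sends a factor congruence θ to the unique e⃗ ∈ Aⁿ such that [e⃗,0⃗] ∈ θ and [e⃗,1⃗] ∈ θ*, where θ* is the unique factor complement of θ. -/
open FirstOrder FirstOrder.Language FirstOrder.Language.Structure

universe u v w

namespace Paper

variable {L : FirstOrder.Language.{0, 0}}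

/-- A congruence on an `L`-algebra: an equivalence relation compatible with all operations. -/
structure AlgCon (L : FirstOrder.Language.{0, 0}) (A : Type u) [L.Structure A] where
  r : A → A → Prop
  refl : ∀ a, r a a
  symm : ∀ {a b}, r a b → r b a
  trans : ∀ {a b c}, r a b → r b c → r a c
  compat : ∀ {m : ℕ} (f : L.Functions m) (x y : Fin m → A),
    (∀ i, r (x i) (y i)) → r (funMap f x) (funMap f y)

namespace AlgCon

variable {A : Type u} [L.Structure A]

theorem ext' {c d : AlgCon L A} (h : ∀ a b, c.r a b ↔ d.r a b) : c = d := by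
  cases c; cases d
  simp only [AlgCon.mk.injEq]
  funext a b
  exact propext (h a b)

/-- The identity (diagonal) congruence Δ. -/
def delta (L : FirstOrder.Language.{0, 0}) (A : Type u) [L.Structure A] : AlgCon L A where
  r := Eq
  refl := fun _ => rfl
  symm := fun h => h.symm
  trans := fun h1 h2 => h1.trans h2
  compat := fun f x y h => by rw [funext h]

/-- The universal congruence ∇. -/
def nabla (L : FirstOrder.Language.{0, 0}) (A : Type u) [L.Structure A] : AlgCon L A where
  r := fun _ _ => True
  refl := fun _ => trivial
  symm := fun _ => trivial
  trans := fun _ _ => trivial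
  compat := fun _ _ _ _ => trivial

/-- Meet (intersection) of congruences. -/
def inf (c d : AlgCon L A) : AlgCon L A where
  r := fun a b => c.r a b ∧ d.r a b
  refl := fun a => ⟨c.refl a, d.refl a⟩
  symm := fun h => ⟨c.symm h.1, d.symm h.2⟩
  trans := fun h1 h2 => ⟨c.trans h1.1 h2.1, d.trans h1.2 h2.2⟩
  compat := fun f x y h =>
    ⟨c.compat f x y fun i => (h i).1, d.compat f x y fun i => (h i).2⟩

/-- Relational composition of congruences (as a binary relation). -/
def comp (c d : AlgCon L A) (a b : A) : Prop := ∃ z, c.r a z ∧ d.r z b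

/-- The congruence generated by a binary relation. -/
def conGen (L : FirstOrder.Language.{0, 0}) {A : Type u} [L.Structure A]
    (R : A → A → Prop) : AlgCon L A where
  r := fun a b => ∀ c : AlgCon L A, (∀ x y, R x y → c.r x y) → c.r a b
  refl := fun a _ _ => AlgCon.refl _ a
  symm := fun h c hc => c.symm (h c hc)
  trans := fun h1 h2 c hc => c.trans (h1 c hc) (h2 c hc)
  compat := fun f x y h c hc => c.compat f x y fun i => h i c hc

/-- Join of congruences in the congruence lattice. -/
def sup (c d : AlgCon L A) : AlgCon L A :=
  conGen L (fun a b => c.r a b ∨ d.r a b)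

end AlgCon

/-- The principal congruence θ(a⃗, b⃗) generated by the pairs (aᵢ, bᵢ). -/
def thetaPairs {A : Type u} [L.Structure A] {n : ℕ} (a b : Fin n → A) : AlgCon L A :=
  AlgCon.conGen L (fun x y => ∃ i, x = a i ∧ y = b i)

/-- The congruence θ(S) generated by S × S. -/
def thetaSet {A : Type u} [L.Structure A] (S : Set A) : AlgCon L A :=
  AlgCon.conGen L (fun x y => x ∈ S ∧ y ∈ S)

/-- `[a⃗, b⃗] ∈ θ`: all pairs (aᵢ, bᵢ) belong to the congruence θ. -/
def inCon {A : Type u} [L.Structure A] {n : ℕ} (θ : AlgCon L A) (a b : Fin n → A) : Prop :=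
  ∀ i, θ.r (a i) (b i)

/-- θ and δ are complementary factor congruences: θ ∩ δ = Δ and θ ∘ δ = ∇. -/
def IsComplFC {A : Type u} [L.Structure A] (θ δ : AlgCon L A) : Prop :=
  θ.inf δ = AlgCon.delta L A ∧ ∀ a b : A, θ.comp δ a b

/-- The set of factor congruences of `A`. -/
def FC (L : FirstOrder.Language.{0, 0}) (A : Type u) [L.Structure A] : Set (AlgCon L A) :=
  {θ | ∃ δ, IsComplFC θ δ}

/-- `S` is a Boolean sublattice of the congruence lattice of `A`: it contains Δ and ∇,
is closed under meet and join, is distributive, and every element has a complement in `S`. -/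
def IsBooleanSublattice {A : Type u} [L.Structure A] (S : Set (AlgCon L A)) : Prop :=
  AlgCon.delta L A ∈ S ∧ AlgCon.nabla L A ∈ S ∧
  (∀ θ ∈ S, ∀ δ ∈ S, θ.inf δ ∈ S) ∧
  (∀ θ ∈ S, ∀ δ ∈ S, θ.sup δ ∈ S) ∧
  (∀ θ ∈ S, ∀ δ ∈ S, ∀ γ ∈ S, θ.inf (δ.sup γ) = (θ.inf δ).sup (θ.inf γ)) ∧
  (∀ θ ∈ S, ∃ δ ∈ S, θ.inf δ = AlgCon.delta L A ∧ θ.sup δ = AlgCon.nabla L A)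

/-- An identity (equation between two terms in finitely many variables). -/
structure Identity (L : FirstOrder.Language.{0, 0}) where
  nvars : ℕ
  lhs : L.Term (Fin nvars)
  rhs : L.Term (Fin nvars)

/-- An identity holds in an algebra. -/
def Identity.Holds (e : Identity L) (A : Type u) [L.Structure A] : Prop :=
  ∀ v : Fin e.nvars → A, e.lhs.realize v = e.rhs.realize v

/-- Membership of an algebra in the variety axiomatized by the set of identities `E`. -/
def InVariety (E : Set (Identity L)) (A : Type u) [L.Structure A] : Prop :=
  ∀ e ∈ E, e.Holds A

/-- The data of the closed terms 0₁, …, 0ₙ and 1₁, …, 1ₙ. -/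
structure ZeroOneData (L : FirstOrder.Language.{0, 0}) where
  n : ℕ
  npos : 0 < n
  zero : Fin n → L.Term Empty
  one : Fin n → L.Term Empty

/-- The interpretation of the tuple 0⃗ in an algebra. -/
def ZeroOneData.zeroA (Z : ZeroOneData L) (A : Type u) [L.Structure A] : Fin Z.n → A :=
  fun i => (Z.zero i).realize Empty.elim

/-- The interpretation of the tuple 1⃗ in an algebra. -/
def ZeroOneData.oneA (Z : ZeroOneData L) (A : Type u) [L.Structure A] : Fin Z.n → A :=
  fun i => (Z.one i).realize Empty.elim

/-- `V ⊨ (0⃗ ≈ 1⃗) → x ≈ y`: `V` is a variety with 0⃗ and 1⃗. -/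
def ZeroOneData.Separates (Z : ZeroOneData L) (E : Set (Identity L)) : Prop :=
  ∀ (A : Type u) [L.Structure A], InVariety E A →
    (∀ i, Z.zeroA A i = Z.oneA A i) → Subsingleton A

/-- Product structure on `A × B`. -/
instance prodStructure (A : Type u) (B : Type u) [L.Structure A] [L.Structure B] :
    L.Structure (A × B) where
  funMap := fun f x => (funMap f (fun i => (x i).1), funMap f (fun i => (x i).2))
  RelMap := fun r x => RelMap r (fun i => (x i).1) ∧ RelMap r (fun i => (x i).2)

/-- A witness that `e⃗` is a central element of `A`: an isomorphism
`τ : A ≅ A₁ × A₂` with `A₁, A₂ ∈ V` and `τ(e⃗) = [0⃗, 1⃗]`. -/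
structure CentralWitness (E : Set (Identity L)) (Z : ZeroOneData L)
    (A : Type u) [L.Structure A] (e : Fin Z.n → A) : Type (u + 1) where
  A₁ : Type u
  A₂ : Type u
  [s₁ : L.Structure A₁]
  [s₂ : L.Structure A₂]
  mem₁ : InVariety E A₁
  mem₂ : InVariety E A₂
  iso : A ≃[L] (A₁ × A₂)
  he : ∀ i, iso (e i) = (Z.zeroA A₁ i, Z.oneA A₂ i)

/-- A witness that `e⃗` and `f⃗` are complementary central elements of `A`. -/
structure ComplCentralWitness (E : Set (Identity L)) (Z : ZeroOneData L)
    (A : Type u) [L.Structure A] (e f : Fin Z.n → A) extends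
    CentralWitness E Z A e : Type (u + 1) where
  hf : ∀ i, iso (f i) = (Z.oneA A₁ i, Z.zeroA A₂ i)

/-- `e⃗` is a central element of `A`. -/
def IsCentral (E : Set (Identity L)) (Z : ZeroOneData L)
    (A : Type u) [L.Structure A] (e : Fin Z.n → A) : Prop :=
  Nonempty (CentralWitness E Z A e)

/-- `e⃗ ⋄_A f⃗`: `e⃗` and `f⃗` are complementary central elements of `A`. -/
def CentDiamond (E : Set (Identity L)) (Z : ZeroOneData L)
    (A : Type u) [L.Structure A] (e f : Fin Z.n → A) : Prop :=
  Nonempty (ComplCentralWitness E Z A e f)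

/-- `V` has Boolean factor congruences: for every `A ∈ V`, `FC(A)` is a Boolean
sublattice of `Con(A)`. -/
def HasBFC (E : Set (Identity L)) : Prop :=
  ∀ (A : Type u) [L.Structure A], InVariety E A → IsBooleanSublattice (FC L A)

/-- `V` is stable by complements: every homomorphism between members of `V`
preserves complementary central elements. -/
def StableByComplements (E : Set (Identity L)) (Z : ZeroOneData L) : Prop :=
  ∀ (A B : Type u) [L.Structure A] [L.Structure B], InVariety E A → InVariety E B →
    ∀ (f : A →[L] B) (e g : Fin Z.n → A), CentDiamond E Z A e g →
      CentDiamond E Z B (fun i => f (e i)) (fun i => f (g i))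

/-- A formula is existential: of the form ∃w⃗ ψ with ψ quantifier-free. -/
def IsExistentialForm {α : Type*} (φ : L.Formula α) : Prop :=
  ∃ (m : ℕ) (ψ : L.BoundedFormula α m), ψ.IsQF ∧ φ = ψ.exs

/-- The formula λ(z⃗, x, y) satisfies the condition (R): for all `A, B ∈ V`,
`A × B ⊨ λ([0⃗,1⃗], (a,c), (b,d))` iff `c = d`. -/
def RightFormulaWorks (E : Set (Identity L)) (Z : ZeroOneData L)
    (φ : L.Formula ((Fin Z.n) ⊕ (Fin 2))) : Prop :=
  ∀ (A B : Type u) [L.Structure A] [L.Structure B], InVariety E A → InVariety E B →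
    ∀ (a b : A) (c d : B),
      (φ.Realize (M := A × B)
        (Sum.elim (fun i => (Z.zeroA A i, Z.oneA B i)) ![(a, c), (b, d)]) ↔ c = d)

/-- The formula ρ(z⃗, x, y) satisfies the condition (L): for all `A, B ∈ V`,
`A × B ⊨ ρ([0⃗,1⃗], (a,c), (b,d))` iff `a = b`. -/
def LeftFormulaWorks (E : Set (Identity L)) (Z : ZeroOneData L)
    (φ : L.Formula ((Fin Z.n) ⊕ (Fin 2))) : Prop :=
  ∀ (A B : Type u) [L.Structure A] [L.Structure B], InVariety E A → InVariety E B →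
    ∀ (a b : A) (c d : B),
      (φ.Realize (M := A × B)
        (Sum.elim (fun i => (Z.zeroA A i, Z.oneA B i)) ![(a, c), (b, d)]) ↔ a = b)

/-- `V` has right existentially definable factor congruences. -/
def HasRexDFC (E : Set (Identity L)) (Z : ZeroOneData L) : Prop :=
  HasBFC.{u} E ∧ ∃ φ : L.Formula ((Fin Z.n) ⊕ (Fin 2)),
    IsExistentialForm φ ∧ RightFormulaWorks.{u} E Z φ

/-- `V` has left existentially definable factor congruences. -/
def HasLexDFC (E : Set (Identity L)) (Z : ZeroOneData L) : Prop :=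
  HasBFC.{u} E ∧ ∃ φ : L.Formula ((Fin Z.n) ⊕ (Fin 2)),
    IsExistentialForm φ ∧ LeftFormulaWorks.{u} E Z φ

/-- `(θ, δ)` is the pair of complementary factor congruences associated with the
central element `e⃗`, i.e. `θ ⋄ δ`, `[e⃗,0⃗] ∈ θ` and `[e⃗,1⃗] ∈ δ`. -/
def PairFor (Z : ZeroOneData L) (A : Type u) [L.Structure A]
    (e : Fin Z.n → A) (θ δ : AlgCon L A) : Prop :=
  IsComplFC θ δ ∧ inCon θ e (Z.zeroA A) ∧ inCon δ e (Z.oneA A)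

/-- `a⃗ = e⃗ ∧ f⃗` in the center: `[a⃗,0⃗] ∈ θ_{0,e} ∩ θ_{0,f}` and `[a⃗,1⃗] ∈ θ_{1,e} ∨ θ_{1,f}`. -/
def IsMeetOf (Z : ZeroOneData L) (A : Type u) [L.Structure A]
    (e f a : Fin Z.n → A) : Prop :=
  ∃ θ₀e θ₁e θ₀f θ₁f : AlgCon L A, PairFor Z A e θ₀e θ₁e ∧ PairFor Z A f θ₀f θ₁f ∧
    inCon (θ₀e.inf θ₀f) a (Z.zeroA A) ∧ inCon (θ₁e.sup θ₁f) a (Z.oneA A)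

/-- `a⃗ = e⃗ ∨ f⃗` in the center: `[a⃗,0⃗] ∈ θ_{0,e} ∨ θ_{0,f}` and `[a⃗,1⃗] ∈ θ_{1,e} ∩ θ_{1,f}`. -/
def IsJoinOf (Z : ZeroOneData L) (A : Type u) [L.Structure A]
    (e f a : Fin Z.n → A) : Prop :=
  ∃ θ₀e θ₁e θ₀f θ₁f : AlgCon L A, PairFor Z A e θ₀e θ₁e ∧ PairFor Z A f θ₀f θ₁f ∧
    inCon (θ₀e.sup θ₀f) a (Z.zeroA A) ∧ inCon (θ₁e.inf θ₁f) a (Z.oneA A)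

/-- `a⃗ = e⃗^c` in the center: `[a⃗,1⃗] ∈ θ_{0,e}` and `[a⃗,0⃗] ∈ θ_{1,e}`. -/
def IsComplOf (Z : ZeroOneData L) (A : Type u) [L.Structure A]
    (e a : Fin Z.n → A) : Prop :=
  ∃ θ₀e θ₁e : AlgCon L A, PairFor Z A e θ₀e θ₁e ∧
    inCon θ₀e a (Z.oneA A) ∧ inCon θ₁e a (Z.zeroA A)

section Quotient

variable {A : Type u} [L.Structure A]

/-- The setoid underlying a congruence. -/
def AlgCon.setoid (c : AlgCon L A) : Setoid A :=
  ⟨c.r, ⟨c.refl, fun h => c.symm h, fun h1 h2 => c.trans h1 h2⟩⟩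

/-- The quotient algebra `A/θ`. -/
def ConQuot (c : AlgCon L A) : Type u := Quotient c.setoid

/-- The class of `a` in `A/θ`. -/
def ConQuot.mk (c : AlgCon L A) (a : A) : ConQuot c := Quotient.mk c.setoid a

noncomputable instance conQuotStructure (c : AlgCon L A) : L.Structure (ConQuot c) where
  funMap := fun f x => ConQuot.mk c (funMap f (fun i => (Quotient.out (α := A) (s := c.setoid) (x i))))
  RelMap := fun r x => ∃ as : Fin _ → A, (∀ i, ConQuot.mk c (as i) = x i) ∧ RelMap r as

theorem conQuot_funMap_mk (c : AlgCon L A) {m : ℕ} (f : L.Functions m) (as : Fin m → A) :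
    funMap f (fun i => ConQuot.mk c (as i)) = ConQuot.mk c (funMap f as) := by
  show ConQuot.mk c _ = ConQuot.mk c _
  apply Quotient.sound
  apply c.compat
  intro i
  exact Quotient.mk_out (s := c.setoid) (as i)

/-- The canonical quotient homomorphism `A → A/θ`. -/
def conQuotMk (c : AlgCon L A) : A →[L] ConQuot c where
  toFun := ConQuot.mk c
  map_fun' := fun f x => (conQuot_funMap_mk c f x).symm
  map_rel' := fun _r x h => ⟨x, fun _ => rfl, h⟩

end Quotient

end Paper


section Aux

open Paper

variable {L : FirstOrder.Language.{0, 0}} {A : Type u} [L.Structure A]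

theorem aux_inf_comm (c d : AlgCon L A) : c.inf d = d.inf c :=
  AlgCon.ext' fun _ _ => and_comm

theorem aux_inf_nabla (c : AlgCon L A) : c.inf (AlgCon.nabla L A) = c :=
  AlgCon.ext' fun _ _ => ⟨fun h => h.1, fun h => ⟨h, trivial⟩⟩

theorem aux_sup_comm (c d : AlgCon L A) : c.sup d = d.sup c :=
  AlgCon.ext' fun a b =>
    ⟨fun h e he => h e fun x y hxy => he x y hxy.symm,
     fun h e he => h e fun x y hxy => he x y hxy.symm⟩

theorem aux_delta_sup (c : AlgCon L A) : (AlgCon.delta L A).sup c = c :=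
  AlgCon.ext' fun a b =>
    ⟨fun h => h c fun x y hxy => hxy.elim (fun e => e ▸ c.refl x) id,
     fun h e he => he a b (Or.inr h)⟩

theorem aux_le_sup_left {c d : AlgCon L A} {a b : A} (h : c.r a b) : (c.sup d).r a b :=
  fun e he => he a b (Or.inl h)

theorem aux_le_sup_right {c d : AlgCon L A} {a b : A} (h : d.r a b) : (c.sup d).r a b :=
  fun e he => he a b (Or.inr h)

theorem aux_eq_nabla {c : AlgCon L A} (h : ∀ a b, c.r a b) : c = AlgCon.nabla L A :=
  AlgCon.ext' fun a b => ⟨fun _ => trivial, fun _ => h a b⟩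

theorem aux_complFC_symm {c d : AlgCon L A} (h : IsComplFC c d) : IsComplFC d c := by
  refine ⟨(aux_inf_comm d c).trans h.1, fun a b => ?_⟩
  obtain ⟨z, h1, h2⟩ := h.2 b a
  exact ⟨z, d.symm h2, c.symm h1⟩

theorem aux_complFC_sup {c d : AlgCon L A} (h : IsComplFC c d) :
    c.sup d = AlgCon.nabla L A := by
  refine aux_eq_nabla fun a b => ?_
  obtain ⟨z, h1, h2⟩ := h.2 a b
  exact fun e he => e.trans (he a z (Or.inl h1)) (he z b (Or.inr h2))

/-- Uniqueness of complements given distributivity instances. -/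
theorem aux_compl_unique {x y a : AlgCon L A}
    (hd1 : x.inf (a.sup y) = (x.inf a).sup (x.inf y))
    (hd2 : y.inf (a.sup x) = (y.inf a).sup (y.inf x))
    (hxa : x.inf a = AlgCon.delta L A) (hax : a.sup x = AlgCon.nabla L A)
    (hya : y.inf a = AlgCon.delta L A) (hay : a.sup y = AlgCon.nabla L A) : x = y := by
  have h1 : x = x.inf y := by
    conv_lhs => rw [← aux_inf_nabla x, ← hay]
    rw [hd1, hxa, aux_delta_sup]
  have h2 : y = y.inf x := by
    conv_lhs => rw [← aux_inf_nabla y, ← hax]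
    rw [hd2, hya, aux_delta_sup]
  rw [h1, aux_inf_comm, ← h2]

theorem aux_mk_surjective (c : AlgCon L A) : Function.Surjective (ConQuot.mk c) :=
  fun x => Quotient.inductionOn x fun a => ⟨a, rfl⟩

theorem aux_quot_inVariety {E : Set (Identity L)} (hA : InVariety E A) (c : AlgCon L A) :
    InVariety E (ConQuot c) := by
  intro i hi
  intro v
  choose w hw using fun j => aux_mk_surjective c (v j)
  have hv : v = (conQuotMk c) ∘ w := funext fun j => (hw j).symm
  rw [hv, FirstOrder.Language.HomClass.realize_term,
    FirstOrder.Language.HomClass.realize_term, hA i hi w]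

theorem aux_hom_closed {B : Type u} [L.Structure B] (g : A →[L] B) (t : L.Term Empty) :
    t.realize (Empty.elim : Empty → B) = g (t.realize Empty.elim) := by
  rw [← FirstOrder.Language.HomClass.realize_term]
  congr
  funext x
  exact x.elim

theorem aux_equiv_closed {B : Type u} [L.Structure B] (g : A ≃[L] B) (t : L.Term Empty) :
    t.realize (Empty.elim : Empty → B) = g (t.realize Empty.elim) := by
  rw [← FirstOrder.Language.HomClass.realize_term]
  congr
  funext x
  exact x.elim

theorem aux_mk_zeroA {Z : ZeroOneData L} (c : AlgCon L A) (i : Fin Z.n) :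
    Z.zeroA (ConQuot c) i = ConQuot.mk c (Z.zeroA A i) :=
  aux_hom_closed (conQuotMk c) (Z.zero i)

theorem aux_mk_oneA {Z : ZeroOneData L} (c : AlgCon L A) (i : Fin Z.n) :
    Z.oneA (ConQuot c) i = ConQuot.mk c (Z.oneA A i) :=
  aux_hom_closed (conQuotMk c) (Z.one i)

/-- First projection as a homomorphism. -/
def auxFst (A B : Type u) [L.Structure A] [L.Structure B] : (A × B) →[L] A where
  toFun := Prod.fst
  map_fun' := fun _ _ => rfl
  map_rel' := fun _ _ h => h.1

/-- Second projection as a homomorphism. -/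
def auxSnd (A B : Type u) [L.Structure A] [L.Structure B] : (A × B) →[L] B where
  toFun := Prod.snd
  map_fun' := fun _ _ => rfl
  map_rel' := fun _ _ h => h.2

theorem aux_zeroA_prod {Z : ZeroOneData L} (B : Type u) [L.Structure B] (i : Fin Z.n) :
    Z.zeroA (A × B) i = (Z.zeroA A i, Z.zeroA B i) := by
  refine Prod.ext ?_ ?_
  · exact (aux_hom_closed (auxFst A B) (Z.zero i)).symm
  · exact (aux_hom_closed (auxSnd A B) (Z.zero i)).symm

theorem aux_oneA_prod {Z : ZeroOneData L} (B : Type u) [L.Structure B] (i : Fin Z.n) :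
    Z.oneA (A × B) i = (Z.oneA A i, Z.oneA B i) := by
  refine Prod.ext ?_ ?_
  · exact (aux_hom_closed (auxFst A B) (Z.one i)).symm
  · exact (aux_hom_closed (auxSnd A B) (Z.one i)).symm

theorem aux_equiv_zeroA {B : Type u} [L.Structure B] (g : A ≃[L] B) {Z : ZeroOneData L}
    (i : Fin Z.n) : g (Z.zeroA A i) = Z.zeroA B i :=
  (aux_equiv_closed g (Z.zero i)).symm

theorem aux_equiv_oneA {B : Type u} [L.Structure B] (g : A ≃[L] B) {Z : ZeroOneData L}
    (i : Fin Z.n) : g (Z.oneA A i) = Z.oneA B i :=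
  (aux_equiv_closed g (Z.one i)).symm

end Aux


open Paper


/-- In a variety with 0⃗ and 1⃗ having BFC, the map
`g : Z(A) → FC(A)`, `g(e⃗) = θ_{0,e}` is a bijection, with inverse sending a
factor congruence θ to the unique `e⃗` with `[e⃗,0⃗] ∈ θ` and `[e⃗,1⃗] ∈ θ*`. -/
theorem statement6 (L : FirstOrder.Language.{0, 0}) [L.IsAlgebraic]
    [Finite (Σ n, L.Functions n)]
    (E : Set (Identity L)) (Z : ZeroOneData L)
    (hsep : ZeroOneData.Separates.{u} Z E) (hbfc : HasBFC.{u} E)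
    (A : Type u) [L.Structure A] (hA : InVariety E A) :
    (∀ e : Fin Z.n → A, IsCentral E Z A e →
      ∃! p : AlgCon L A × AlgCon L A, PairFor Z A e p.1 p.2) ∧
    (∀ θ δ : AlgCon L A, IsComplFC θ δ →
      ∃! e : Fin Z.n → A, IsCentral E Z A e ∧
        inCon θ e (Z.zeroA A) ∧ inCon δ e (Z.oneA A)) := by
  classical
  obtain ⟨hD, hN, hinfS, hsupS, hdist, hcomplS⟩ := hbfc A hA
  -- Uniqueness of the pair of complementary factor congruences for a central element.
  have key : ∀ (e : Fin Z.n → A) (θ δ θ' δ' : AlgCon L A),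
      PairFor Z A e θ δ → PairFor Z A e θ' δ' → θ = θ' ∧ δ = δ' := by
    intro e θ δ θ' δ' h h'
    have hθFC : θ ∈ FC L A := ⟨δ, h.1⟩
    have hδFC : δ ∈ FC L A := ⟨θ, aux_complFC_symm h.1⟩
    have hθ'FC : θ' ∈ FC L A := ⟨δ', h'.1⟩
    have hδ'FC : δ' ∈ FC L A := ⟨θ', aux_complFC_symm h'.1⟩
    have claim : ∀ c d : AlgCon L A, inCon c e (Z.zeroA A) → inCon d e (Z.oneA A) →
        c.sup d = AlgCon.nabla L A := by
      intro c d hc hd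
      set μ := c.sup d with hμ
      have hsub : Subsingleton (ConQuot μ) := by
        apply hsep (ConQuot μ) (aux_quot_inVariety hA μ)
        intro i
        rw [aux_mk_zeroA, aux_mk_oneA]
        have h0 : ConQuot.mk μ (Z.zeroA A i) = ConQuot.mk μ (e i) :=
          Quot.sound (μ.symm (aux_le_sup_left (hc i)))
        have h1 : ConQuot.mk μ (e i) = ConQuot.mk μ (Z.oneA A i) :=
          Quot.sound (aux_le_sup_right (hd i))
        exact h0.trans h1
      refine aux_eq_nabla fun a b => ?_
      exact Quotient.exact (hsub.elim (ConQuot.mk μ a) (ConQuot.mk μ b))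
    have hsup1 : θ.sup δ' = AlgCon.nabla L A := claim θ δ' h.2.1 h'.2.2
    have hsup2 : θ'.sup δ = AlgCon.nabla L A := claim θ' δ h'.2.1 h.2.2
    have e1 : δ = δ.inf δ' := by
      conv_lhs => rw [← aux_inf_nabla δ, ← hsup1]
      rw [hdist δ hδFC θ hθFC δ' hδ'FC, aux_inf_comm δ θ, h.1.1, aux_delta_sup]
    have e2 : δ' = δ'.inf δ := by
      conv_lhs => rw [← aux_inf_nabla δ', ← hsup2]
      rw [hdist δ' hδ'FC θ' hθ'FC δ hδFC, aux_inf_comm δ' θ', h'.1.1, aux_delta_sup]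
    have hδδ' : δ = δ' := by rw [e1, aux_inf_comm, ← e2]
    refine ⟨?_, hδδ'⟩
    refine aux_compl_unique (a := δ) (hdist θ hθFC δ hδFC θ' hθ'FC)
      (hdist θ' hθ'FC δ hδFC θ hθFC) h.1.1 ?_ ?_ ?_
    · rw [aux_sup_comm]; exact aux_complFC_sup h.1
    · rw [hδδ']; exact h'.1.1
    · rw [hδδ', aux_sup_comm]; exact aux_complFC_sup h'.1
  constructor
  · -- Part 1: each central element determines a unique pair.
    intro e hce
    obtain ⟨W⟩ := hce
    letI : L.Structure W.A₁ := W.s₁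
    letI : L.Structure W.A₂ := W.s₂
    set τ := W.iso with hτ
    let θ : AlgCon L A :=
      { r := fun a b => (τ a).1 = (τ b).1
        refl := fun _ => rfl
        symm := fun h => h.symm
        trans := fun h1 h2 => h1.trans h2
        compat := by
          intro m f x y hxy
          show (τ (funMap f x)).1 = (τ (funMap f y)).1
          rw [FirstOrder.Language.HomClass.map_fun, FirstOrder.Language.HomClass.map_fun]
          show funMap f (fun i => (τ (x i)).1) = funMap f (fun i => (τ (y i)).1)
          exact congrArg _ (funext hxy) }
    let δ : AlgCon L A :=
      { r := fun a b => (τ a).2 = (τ b).2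
        refl := fun _ => rfl
        symm := fun h => h.symm
        trans := fun h1 h2 => h1.trans h2
        compat := by
          intro m f x y hxy
          show (τ (funMap f x)).2 = (τ (funMap f y)).2
          rw [FirstOrder.Language.HomClass.map_fun, FirstOrder.Language.HomClass.map_fun]
          show funMap f (fun i => (τ (x i)).2) = funMap f (fun i => (τ (y i)).2)
          exact congrArg _ (funext hxy) }
    have hpair : PairFor Z A e θ δ := by
      refine ⟨⟨?_, ?_⟩, ?_, ?_⟩
      · refine AlgCon.ext' fun a b => ⟨fun h => τ.injective (Prod.ext h.1 h.2), fun h => ?_⟩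
        cases h; exact ⟨rfl, rfl⟩
      · intro a b
        refine ⟨τ.symm ((τ a).1, (τ b).2), ?_, ?_⟩
        · show (τ a).1 = (τ (τ.symm ((τ a).1, (τ b).2))).1
          rw [FirstOrder.Language.Equiv.apply_symm_apply]
        · show (τ (τ.symm ((τ a).1, (τ b).2))).2 = (τ b).2
          rw [FirstOrder.Language.Equiv.apply_symm_apply]
      · intro i
        show (τ (e i)).1 = (τ (Z.zeroA A i)).1
        rw [W.he i, aux_equiv_zeroA τ, aux_zeroA_prod]
      · intro i
        show (τ (e i)).2 = (τ (Z.oneA A i)).2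
        rw [W.he i, aux_equiv_oneA τ, aux_oneA_prod]
    refine ⟨(θ, δ), hpair, fun q hq => ?_⟩
    obtain ⟨h1, h2⟩ := key e q.1 q.2 θ δ hq hpair
    exact Prod.ext h1 h2
  · -- Part 2: each pair of complementary factor congruences determines a unique
    -- central element.
    intro θ δ hcc
    choose e he0 he1 using fun i => hcc.2 (Z.zeroA A i) (Z.oneA A i)
    have hθ0 : inCon θ e (Z.zeroA A) := fun i => θ.symm (he0 i)
    have hδ1 : inCon δ e (Z.oneA A) := he1
    let g : A → ConQuot θ × ConQuot δ := fun a => (ConQuot.mk θ a, ConQuot.mk δ a)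
    have hinj : Function.Injective g := by
      intro a b hab
      have h1 : θ.r a b := Quotient.exact (congrArg Prod.fst hab)
      have h2 : δ.r a b := Quotient.exact (congrArg Prod.snd hab)
      have h3 : (θ.inf δ).r a b := ⟨h1, h2⟩
      rw [hcc.1] at h3
      exact h3
    have hsurj : Function.Surjective g := by
      rintro ⟨x, y⟩
      obtain ⟨a, rfl⟩ := aux_mk_surjective θ x
      obtain ⟨b, rfl⟩ := aux_mk_surjective δ y
      obtain ⟨z, hz1, hz2⟩ := hcc.2 a b
      exact ⟨z, Prod.ext (Quot.sound (θ.symm hz1)) (Quot.sound hz2)⟩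
    have hcent : IsCentral E Z A e := by
      refine ⟨{ A₁ := ConQuot θ, A₂ := ConQuot δ,
                mem₁ := aux_quot_inVariety hA θ, mem₂ := aux_quot_inVariety hA δ,
                iso := { toEquiv := Equiv.ofBijective g ⟨hinj, hsurj⟩
                         map_fun' := ?_, map_rel' := ?_ },
                he := ?_ }⟩
      · intro m f x
        show g (funMap f x) = funMap f (g ∘ x)
        refine Prod.ext ?_ ?_
        · exact (conQuot_funMap_mk θ f x).symm
        · exact (conQuot_funMap_mk δ f x).symm
      · intro m r
        exact ((‹L.IsAlgebraic› : L.IsAlgebraic) m).elim r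
      · intro i
        show g (e i) = (Z.zeroA (ConQuot θ) i, Z.oneA (ConQuot δ) i)
        refine Prod.ext ?_ ?_
        · rw [aux_mk_zeroA]
          exact Quot.sound (hθ0 i)
        · rw [aux_mk_oneA]
          exact Quot.sound (hδ1 i)
    refine ⟨e, ⟨hcent, hθ0, hδ1⟩, ?_⟩
    rintro e' ⟨-, h0', h1'⟩
    funext i
    have h1 : θ.r (e' i) (e i) := θ.trans (h0' i) (θ.symm (hθ0 i))
    have h2 : δ.r (e' i) (e i) := δ.trans (h1' i) (δ.symm (hδ1 i))
    have h3 : (θ.inf δ).r (e' i) (e i) := ⟨h1, h2⟩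
    rw [hcc.1] at h3
    exact h3
end

section
/- Let V be a variety with 0⃗ and 1⃗ having Boolean factor congruences (BFC), and let A ∈ V. Then Z(A) = (Z(A), ∧, ∨, ^c, 0⃗, 1⃗), with the operations defined via unique solutions of the associated congruence systems, is a Boolean algebra, and the map e⃗ ↦ θ_{0,e} is a Boolean algebra isomorphism from Z(A) onto (FC(A), ∨, ∩, *, Δ, ∇), where * denotes factor complement. -/
open FirstOrder FirstOrder.Language FirstOrder.Language.Structure

universe u v w

/-!
A central element `e⃗`, witnessed by `A ≅ A₁ × A₂`, gives the pair of complementary factor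
congruences `(θ, δ)` formed by the kernels of the two projections, with `[e⃗,0⃗] ∈ θ` and
`[e⃗,1⃗] ∈ δ`; conversely such a pair makes `e⃗` central through `A ≅ A/θ × A/δ`. Under BFC the
factor congruences form a Boolean algebra in which `δ` is forced to be `θᶜ`, and then `θ`
determines `e⃗`. Conversely `e⃗` determines `θ`: for another pair `(θ', θ'ᶜ)` of `e⃗` we have
`0⃗ θ e⃗ θ'ᶜ 1⃗`, and since `0⃗ ≈ 1⃗` trivializes an algebra of the variety, `θ ⊔ θ'ᶜ = ∇`, that is
`θ' ≤ θ`. So `e⃗ ↦ θ_{0,e}` is a bijection `Z(A) ≃ FC(A)`; transporting the Boolean algebra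
along it yields exactly the operations given by the congruence conditions.
-/

namespace Paper

variable {L : FirstOrder.Language.{0, 0}} {A : Type u} [L.Structure A]

namespace AlgCon

instance : PartialOrder (AlgCon L A) where
  le c d := ∀ ⦃a b⦄, c.r a b → d.r a b
  le_refl _ _ _ h := h
  le_trans _ _ _ h₁ h₂ _ _ h := h₂ (h₁ h)
  le_antisymm _ _ h₁ h₂ := ext' fun a b => ⟨@h₁ a b, @h₂ a b⟩

theorem conGen_le {R : A → A → Prop} {c : AlgCon L A} (h : ∀ x y, R x y → c.r x y) :
    conGen L R ≤ c :=
  fun _ _ hab => hab c h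

instance : Lattice (AlgCon L A) where
  sup := sup
  le_sup_left _ _ _ _ h _ hγ := hγ _ _ (Or.inl h)
  le_sup_right _ _ _ _ h _ hγ := hγ _ _ (Or.inr h)
  sup_le _ _ _ h₁ h₂ := conGen_le fun x y h => h.elim (@h₁ x y) (@h₂ x y)
  inf := inf
  inf_le_left _ _ _ _ h := h.1
  inf_le_right _ _ _ _ h := h.2
  le_inf _ _ _ h₁ h₂ _ _ h := ⟨h₁ h, h₂ h⟩

instance : BoundedOrder (AlgCon L A) where
  top := nabla L A
  le_top _ _ _ _ := trivial
  bot := delta L A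
  bot_le c a _ h := h ▸ c.refl a

def ker {B : Type u} [L.Structure B] {F : Type*} [FunLike F A B] [HomClass L F A B] (f : F) :
    AlgCon L A where
  r a b := f a = f b
  refl _ := rfl
  symm h := h.symm
  trans h₁ h₂ := h₁.trans h₂
  compat g x y hxy := by
    rw [HomClass.map_fun, HomClass.map_fun]
    exact congrArg _ (funext hxy)

end AlgCon

section FactorCongruences

variable {θ δ : AlgCon L A}

theorem IsComplFC.mem_left (h : IsComplFC θ δ) : θ ∈ FC L A := ⟨δ, h⟩

theorem IsComplFC.symm (h : IsComplFC θ δ) : IsComplFC δ θ := by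
  refine ⟨?_, fun a b => ?_⟩
  · rw [← h.1]
    exact AlgCon.ext' fun a b => and_comm
  · obtain ⟨z, hθ, hδ⟩ := h.2 b a
    exact ⟨z, δ.symm hδ, θ.symm hθ⟩

theorem IsComplFC.eq_of_r (h : IsComplFC θ δ) {a b : A} (hθ : θ.r a b) (hδ : δ.r a b) :
    a = b := by
  have hab : (θ.inf δ).r a b := ⟨hθ, hδ⟩
  rwa [h.1] at hab

theorem IsComplFC.mem_right (h : IsComplFC θ δ) : δ ∈ FC L A := h.symm.mem_left

theorem IsComplFC.isCompl (h : IsComplFC θ δ) : IsCompl θ δ := by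
  refine IsCompl.of_eq h.1 (top_unique fun a b _ => ?_)
  obtain ⟨z, hθ, hδ⟩ := h.2 a b
  exact (θ ⊔ δ).trans (le_sup_left (a := θ) hθ) (le_sup_right (b := δ) hδ)

end FactorCongruences

section BooleanSublattice

variable {S : Set (AlgCon L A)} [hS : Fact (IsBooleanSublattice S)]

noncomputable instance : BooleanAlgebra S :=
  letI : Lattice S := Subtype.lattice (fun _ _ hx hy => hS.out.2.2.2.1 _ hx _ hy)
    (fun _ _ hx hy => hS.out.2.2.1 _ hx _ hy)
  letI : DistribLattice S := DistribLattice.ofInfSupLe fun a b c =>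
    (Subtype.ext (hS.out.2.2.2.2.1 _ a.2 _ b.2 _ c.2)).le
  letI : BoundedOrder S := Subtype.boundedOrder hS.out.1 hS.out.2.1
  letI : ComplementedLattice S := ⟨fun x =>
    let ⟨δ, hδ, hinf, hsup⟩ := hS.out.2.2.2.2.2 x.1 x.2
    ⟨⟨δ, hδ⟩, IsCompl.of_eq (Subtype.ext hinf) (Subtype.ext hsup)⟩⟩
  DistribLattice.booleanAlgebraOfComplemented S

@[simp, norm_cast]
theorem coe_sup (x y : S) : ((x ⊔ y : S) : AlgCon L A) = (x : AlgCon L A) ⊔ (y : AlgCon L A) :=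
  rfl

@[simp, norm_cast]
theorem coe_inf (x y : S) : ((x ⊓ y : S) : AlgCon L A) = (x : AlgCon L A) ⊓ (y : AlgCon L A) :=
  rfl

@[simp, norm_cast]
theorem coe_top : ((⊤ : S) : AlgCon L A) = ⊤ := rfl

@[simp, norm_cast]
theorem coe_bot : ((⊥ : S) : AlgCon L A) = ⊥ := rfl

theorem codisjoint_coe_iff {x y : S} : Codisjoint (x : AlgCon L A) y ↔ Codisjoint x y := by
  rw [codisjoint_iff, codisjoint_iff, ← coe_sup, ← coe_top (S := S), Subtype.coe_inj]

theorem isCompl_coe_iff {x y : S} : IsCompl (x : AlgCon L A) y ↔ IsCompl x y := by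
  rw [isCompl_iff, isCompl_iff, disjoint_iff, disjoint_iff, ← coe_inf, ← coe_bot (S := S),
    Subtype.coe_inj, codisjoint_coe_iff]

end BooleanSublattice

section BFC

variable [Fact (IsBooleanSublattice (FC L A))]

theorem IsComplFC.eq_compl {s : FC L A} {δ : AlgCon L A} (h : IsComplFC s δ) :
    δ = (sᶜ : FC L A) :=
  congrArg Subtype.val (isCompl_coe_iff (y := ⟨δ, h.mem_right⟩) |>.mp h.isCompl).compl_eq.symm

theorem isComplFC_compl (s : FC L A) : IsComplFC (s : AlgCon L A) (sᶜ : FC L A) := by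
  obtain ⟨δ, h⟩ := s.2
  rwa [← h.eq_compl]

end BFC

section ClosedTerms

variable {B : Type u} [L.Structure B]

theorem HomClass.map_realize_empty {F : Type*} [FunLike F A B] [HomClass L F A B] (f : F)
    (t : L.Term Empty) : f (t.realize Empty.elim) = t.realize Empty.elim := by
  rw [← HomClass.realize_term f]
  exact congrArg t.realize (Subsingleton.elim _ _)

theorem map_zeroA {F : Type*} [FunLike F A B] [HomClass L F A B] (Z : ZeroOneData L) (f : F)
    (i : Fin Z.n) : f (Z.zeroA A i) = Z.zeroA B i :=
  HomClass.map_realize_empty f _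

theorem map_oneA {F : Type*} [FunLike F A B] [HomClass L F A B] (Z : ZeroOneData L) (f : F)
    (i : Fin Z.n) : f (Z.oneA A i) = Z.oneA B i :=
  HomClass.map_realize_empty f _

end ClosedTerms

section Products

def fstHom (B C : Type u) [L.Structure B] [L.Structure C] : (B × C) →[L] B where
  toFun := Prod.fst
  map_fun' _ _ := rfl
  map_rel' _ _ h := h.1

def sndHom (B C : Type u) [L.Structure B] [L.Structure C] : (B × C) →[L] C where
  toFun := Prod.snd
  map_fun' _ _ := rfl
  map_rel' _ _ h := h.2

end Products

section Quotients

theorem inVariety_conQuot {E : Set (Identity L)} (hA : InVariety E A) (c : AlgCon L A) :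
    InVariety E (ConQuot c) := by
  intro e he v
  obtain ⟨w, rfl⟩ : ∃ w : Fin e.nvars → A, ⇑(conQuotMk c) ∘ w = v :=
    ⟨fun i => Quotient.out (s := c.setoid) (v i),
      funext fun i => Quotient.out_eq (s := c.setoid) (v i)⟩
  rw [HomClass.realize_term, HomClass.realize_term, hA e he w]

theorem eq_top_of_zero_one {E : Set (Identity L)} {Z : ZeroOneData L}
    (hsep : ZeroOneData.Separates.{u} Z E) (hA : InVariety E A) {γ : AlgCon L A}
    (h : inCon γ (Z.zeroA A) (Z.oneA A)) : γ = ⊤ := by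
  have : Subsingleton (ConQuot γ) := hsep _ (inVariety_conQuot hA γ) fun i => by
    rw [← map_zeroA Z (conQuotMk γ) i, ← map_oneA Z (conQuotMk γ) i]
    exact Quotient.sound (h i)
  exact top_unique fun a b _ =>
    Quotient.exact (s := γ.setoid) (Subsingleton.elim (ConQuot.mk γ a) (ConQuot.mk γ b))

end Quotients

section CentralElements

variable {E : Set (Identity L)} {Z : ZeroOneData L} {e e' : Fin Z.n → A}
  {θ δ δ' : AlgCon L A}

theorem IsCentral.exists_pairFor (he : IsCentral E Z A e) : ∃ θ δ, PairFor Z A e θ δ := by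
  obtain ⟨w⟩ := he
  let := w.s₁; let := w.s₂
  refine ⟨AlgCon.ker ((fstHom _ _).comp w.iso.toHom), AlgCon.ker ((sndHom _ _).comp w.iso.toHom),
    ⟨?_, fun a b => ⟨w.iso.symm ((w.iso a).1, (w.iso b).2), ?_, ?_⟩⟩, fun i => ?_, fun i => ?_⟩
  · exact AlgCon.ext' fun a b =>
      ⟨fun h => w.iso.injective (Prod.ext h.1 h.2), fun h => h ▸ ⟨rfl, rfl⟩⟩
  · exact (congrArg Prod.fst (w.iso.apply_symm_apply ((w.iso a).1, (w.iso b).2))).symm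
  · show (w.iso _).2 = (w.iso b).2
    rw [w.iso.apply_symm_apply]
  · exact (congrArg Prod.fst (w.he i)).trans
      ((map_zeroA Z (fstHom _ _) i).symm.trans (congrArg Prod.fst (map_zeroA Z w.iso i).symm))
  · exact (congrArg Prod.snd (w.he i)).trans
      ((map_oneA Z (sndHom _ _) i).symm.trans (congrArg Prod.snd (map_oneA Z w.iso i).symm))

noncomputable def IsComplFC.prodEquiv [L.IsAlgebraic] (h : IsComplFC θ δ) :
    A ≃[L] (ConQuot θ × ConQuot δ) where
  toEquiv := Equiv.ofBijective (fun a => (ConQuot.mk θ a, ConQuot.mk δ a)) <| by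
    refine ⟨fun a b hab => ?_, fun p => ?_⟩
    · exact h.eq_of_r (Quotient.exact (congrArg Prod.fst hab))
        (Quotient.exact (congrArg Prod.snd hab))
    · obtain ⟨a, ha⟩ := Quotient.exists_rep p.1
      obtain ⟨b, hb⟩ := Quotient.exists_rep p.2
      obtain ⟨z, hθ, hδ⟩ := h.2 a b
      exact ⟨z, Prod.ext (ha ▸ Quotient.sound (θ.symm hθ)) (hb ▸ Quotient.sound hδ)⟩
  map_fun' f x := by
    show (ConQuot.mk θ _, ConQuot.mk δ _) = _
    rw [← conQuot_funMap_mk, ← conQuot_funMap_mk]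
    rfl
  map_rel' r _ := isEmptyElim r

theorem PairFor.isCentral [L.IsAlgebraic] (hA : InVariety E A) (h : PairFor Z A e θ δ) :
    IsCentral E Z A e := by
  refine ⟨⟨ConQuot θ, ConQuot δ, inVariety_conQuot hA θ, inVariety_conQuot hA δ,
    h.1.prodEquiv, fun i => Prod.ext ?_ ?_⟩⟩
  · exact (Quotient.sound (h.2.1 i)).trans (map_zeroA Z (conQuotMk θ) i)
  · exact (Quotient.sound (h.2.2 i)).trans (map_oneA Z (conQuotMk δ) i)

theorem IsComplFC.exists_pairFor (Z : ZeroOneData L) (h : IsComplFC θ δ) :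
    ∃ e, PairFor Z A e θ δ := by
  choose e hθ hδ using fun i => h.2 (Z.zeroA A i) (Z.oneA A i)
  exact ⟨e, h, fun i => θ.symm (hθ i), hδ⟩

theorem PairFor.elem_unique (h : PairFor Z A e θ δ) (h' : PairFor Z A e' θ δ) : e = e' := by
  funext i
  exact h.1.eq_of_r (θ.trans (h.2.1 i) (θ.symm (h'.2.1 i)))
    (δ.trans (h.2.2 i) (δ.symm (h'.2.2 i)))

variable [Fact (IsBooleanSublattice (FC L A))]

theorem PairFor.le (hsep : ZeroOneData.Separates.{u} Z E) (hA : InVariety E A)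
    {s s' : FC L A} (h : PairFor Z A e s δ) (h' : PairFor Z A e s' δ') : s' ≤ s := by
  have hsup : Codisjoint (s : AlgCon L A) δ' := codisjoint_iff.mpr <|
    eq_top_of_zero_one hsep hA fun i =>
      (s.1 ⊔ δ').trans ((s.1 ⊔ δ').symm (le_sup_left (a := s.1) (h.2.1 i)))
        (le_sup_right (b := δ') (h'.2.2 i))
  rw [h'.1.eq_compl, codisjoint_coe_iff, codisjoint_iff_compl_le_right] at hsup
  exact compl_le_compl_iff_le.mp hsup

theorem PairFor.left_unique (hsep : ZeroOneData.Separates.{u} Z E) (hA : InVariety E A)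
    {s s' : FC L A} (h : PairFor Z A e s δ) (h' : PairFor Z A e s' δ') : s = s' :=
  le_antisymm (h'.le hsep hA h) (h.le hsep hA h')

end CentralElements

section Center

variable {E : Set (Identity L)} {Z : ZeroOneData L}

abbrev Center (E : Set (Identity L)) (Z : ZeroOneData L) (A : Type u) [L.Structure A] : Type u :=
  {e : Fin Z.n → A // IsCentral E Z A e}

/-- The factor congruence `θ_{0,e}`, well defined by `PairFor.left_unique`. -/
noncomputable def Center.factorCongr (e : Center E Z A) : FC L A :=
  ⟨_, e.2.exists_pairFor.choose_spec.choose_spec.1.mem_left⟩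

variable [Fact (IsBooleanSublattice (FC L A))]

theorem Center.pairFor_factorCongr (e : Center E Z A) :
    PairFor Z A e.1 e.factorCongr (e.factorCongrᶜ : FC L A) := by
  obtain ⟨h, h₀, h₁⟩ := e.2.exists_pairFor.choose_spec.choose_spec
  have hδ := IsComplFC.eq_compl (s := e.factorCongr) h
  exact ⟨hδ ▸ h, h₀, hδ ▸ h₁⟩

theorem Center.factorCongr_injective :
    Function.Injective (Center.factorCongr : Center E Z A → FC L A) := fun e f hef =>
  Subtype.ext <| e.pairFor_factorCongr.elem_unique (hef ▸ f.pairFor_factorCongr)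

theorem Center.factorCongr_surjective [L.IsAlgebraic] (hsep : ZeroOneData.Separates.{u} Z E)
    (hA : InVariety E A) : Function.Surjective (Center.factorCongr : Center E Z A → FC L A) := by
  intro s
  obtain ⟨e, he⟩ := (isComplFC_compl s).exists_pairFor Z
  exact ⟨⟨e, he.isCentral hA⟩, (pairFor_factorCongr _).left_unique hsep hA he⟩

noncomputable def centerEquivFC [L.IsAlgebraic] (hsep : ZeroOneData.Separates.{u} Z E)
    (hA : InVariety E A) : Center E Z A ≃ FC L A :=
  Equiv.ofBijective Center.factorCongr
    ⟨Center.factorCongr_injective, Center.factorCongr_surjective hsep hA⟩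

theorem exists_orderIso_factorCongr [L.IsAlgebraic] (hsep : ZeroOneData.Separates.{u} Z E)
    (hA : InVariety E A) :
    ∃ (_ : BooleanAlgebra (Center E Z A)) (ψ : Center E Z A ≃o FC L A),
      ∀ e, PairFor Z A e.1 (ψ e) ((ψ e)ᶜ : FC L A) :=
  let φ := centerEquivFC hsep hA
  let _ := φ.booleanAlgebra
  ⟨_, ⟨φ, Iff.rfl⟩, Center.pairFor_factorCongr⟩

end Center

section Operations

variable {E : Set (Identity L)} {Z : ZeroOneData L} [Fact (IsBooleanSublattice (FC L A))]
  [BooleanAlgebra (Center E Z A)] {φ : Center E Z A ≃o FC L A}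

theorem isMeetOf_inf (hφ : ∀ e, PairFor Z A e.1 (φ e) ((φ e)ᶜ : FC L A)) (e f : Center E Z A) :
    IsMeetOf Z A e.1 f.1 (e ⊓ f).1 := by
  have h := hφ (e ⊓ f)
  rw [map_inf, compl_inf] at h
  exact ⟨_, _, _, _, hφ e, hφ f, h.2⟩

theorem isJoinOf_sup (hφ : ∀ e, PairFor Z A e.1 (φ e) ((φ e)ᶜ : FC L A)) (e f : Center E Z A) :
    IsJoinOf Z A e.1 f.1 (e ⊔ f).1 := by
  have h := hφ (e ⊔ f)
  rw [map_sup, compl_sup] at h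
  exact ⟨_, _, _, _, hφ e, hφ f, h.2⟩

theorem isComplOf_compl (hφ : ∀ e, PairFor Z A e.1 (φ e) ((φ e)ᶜ : FC L A)) (e : Center E Z A) :
    IsComplOf Z A e.1 eᶜ.1 := by
  have h := hφ eᶜ
  rw [map_compl', compl_compl] at h
  exact ⟨_, _, hφ e, h.2.2, h.2.1⟩

theorem val_bot (hφ : ∀ e, PairFor Z A e.1 (φ e) ((φ e)ᶜ : FC L A)) :
    (⊥ : Center E Z A).1 = Z.zeroA A := by
  have h := (hφ ⊥).2.1
  rw [map_bot] at h
  exact funext h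

theorem val_top (hφ : ∀ e, PairFor Z A e.1 (φ e) ((φ e)ᶜ : FC L A)) :
    (⊤ : Center E Z A).1 = Z.oneA A := by
  have h := (hφ ⊤).2.2
  rw [map_top, compl_top] at h
  exact funext h

end Operations

end Paper

open Paper

theorem statement7_general (L : FirstOrder.Language.{0, 0}) [L.IsAlgebraic]
    (E : Set (Identity L)) (Z : ZeroOneData L)
    (hsep : ZeroOneData.Separates.{u} Z E) (hbfc : HasBFC.{u} E)
    (A : Type u) [L.Structure A] (hA : InVariety E A) :
    ∃ inst : BooleanAlgebra {e : Fin Z.n → A // IsCentral E Z A e},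
      (∀ e f : {e : Fin Z.n → A // IsCentral E Z A e},
        IsMeetOf Z A e.1 f.1 (inst.inf e f).1) ∧
      (∀ e f : {e : Fin Z.n → A // IsCentral E Z A e},
        IsJoinOf Z A e.1 f.1 (inst.sup e f).1) ∧
      (∀ e : {e : Fin Z.n → A // IsCentral E Z A e},
        IsComplOf Z A e.1 (inst.compl e).1) ∧
      inst.bot.1 = Z.zeroA A ∧ inst.top.1 = Z.oneA A ∧
      ∃ g : {e : Fin Z.n → A // IsCentral E Z A e} → AlgCon L A,
        (∀ e, ∃ δ, PairFor Z A e.1 (g e) δ) ∧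
        Function.Injective g ∧
        (∀ θ ∈ FC L A, ∃ e, g e = θ) ∧
        (∀ e f, g (inst.inf e f) = (g e).inf (g f)) ∧
        (∀ e f, g (inst.sup e f) = (g e).sup (g f)) ∧
        (∀ e, IsComplFC (g e) (g (inst.compl e))) ∧
        g inst.bot = AlgCon.delta L A ∧ g inst.top = AlgCon.nabla L A := by
  have : Fact (IsBooleanSublattice (FC L A)) := ⟨hbfc A hA⟩
  obtain ⟨inst, ψ, hψ⟩ := exists_orderIso_factorCongr hsep hA
  refine ⟨inst, fun e f => isMeetOf_inf hψ e f, fun e f => isJoinOf_sup hψ e f,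
    fun e => isComplOf_compl hψ e, val_bot hψ, val_top hψ, fun e => ψ e, fun e => ⟨_, hψ e⟩,
    Subtype.val_injective.comp ψ.injective,
    fun θ hθ => ⟨ψ.symm ⟨θ, hθ⟩, congrArg Subtype.val (ψ.apply_symm_apply _)⟩,
    fun e f => congrArg Subtype.val (map_inf ψ e f), fun e f => congrArg Subtype.val (map_sup ψ e f),
    fun e => ?_, congrArg Subtype.val (map_bot ψ), congrArg Subtype.val (map_top ψ)⟩
  show IsComplFC (ψ e : AlgCon L A) (ψ eᶜ : FC L A)
  rw [map_compl']
  exact isComplFC_compl (ψ e)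

/-- In a variety with 0⃗ and 1⃗ having BFC, the center `Z(A)` with
the operations defined by the associated congruence conditions is a Boolean
algebra, and `e⃗ ↦ θ_{0,e}` is a Boolean algebra isomorphism onto
`(FC(A), ∨, ∩, *, Δ, ∇)`. -/
theorem statement7 (L : FirstOrder.Language.{0, 0}) [L.IsAlgebraic]
    [Finite (Σ n, L.Functions n)]
    (E : Set (Identity L)) (Z : ZeroOneData L)
    (hsep : ZeroOneData.Separates.{u} Z E) (hbfc : HasBFC.{u} E)
    (A : Type u) [L.Structure A] (hA : InVariety E A) :
    ∃ inst : BooleanAlgebra {e : Fin Z.n → A // IsCentral E Z A e},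
      (∀ e f : {e : Fin Z.n → A // IsCentral E Z A e},
        IsMeetOf Z A e.1 f.1 (inst.inf e f).1) ∧
      (∀ e f : {e : Fin Z.n → A // IsCentral E Z A e},
        IsJoinOf Z A e.1 f.1 (inst.sup e f).1) ∧
      (∀ e : {e : Fin Z.n → A // IsCentral E Z A e},
        IsComplOf Z A e.1 (inst.compl e).1) ∧
      inst.bot.1 = Z.zeroA A ∧ inst.top.1 = Z.oneA A ∧
      ∃ g : {e : Fin Z.n → A // IsCentral E Z A e} → AlgCon L A,
        (∀ e, ∃ δ, PairFor Z A e.1 (g e) δ) ∧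
        Function.Injective g ∧
        (∀ θ ∈ FC L A, ∃ e, g e = θ) ∧
        (∀ e f, g (inst.inf e f) = (g e).inf (g f)) ∧
        (∀ e f, g (inst.sup e f) = (g e).sup (g f)) ∧
        (∀ e, IsComplFC (g e) (g (inst.compl e))) ∧
        g inst.bot = AlgCon.delta L A ∧ g inst.top = AlgCon.nabla L A :=
  statement7_general L E Z hsep hbfc A hA
end

section
/- Let V be a variety with 0⃗ and 1⃗ having Boolean factor congruences (BFC). Then in every algebra A ∈ V any two factor congruences permute: for all θ, δ ∈ FC(A), θ ∘ δ = δ ∘ θ. -/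
open FirstOrder FirstOrder.Language FirstOrder.Language.Structure

universe u v w

open Paper

section Aux

variable {L : FirstOrder.Language.{0, 0}} {A : Type u} [L.Structure A]

theorem aux_sup_left (c d : AlgCon L A) {a b : A} (h : c.r a b) : (c.sup d).r a b :=
  fun e he => he a b (Or.inl h)

theorem aux_sup_right (c d : AlgCon L A) {a b : A} (h : d.r a b) : (c.sup d).r a b :=
  fun e he => he a b (Or.inr h)

theorem aux_sup_elim {c d e : AlgCon L A} (hc : ∀ a b, c.r a b → e.r a b)
    (hd : ∀ a b, d.r a b → e.r a b) {a b : A} (h : (c.sup d).r a b) : e.r a b :=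
  h e (fun x y hx => hx.elim (hc x y) (hd x y))

/-- The witness of a factor congruence is itself a factor congruence. -/
theorem aux_compl_mem {θ δ : AlgCon L A} (h : IsComplFC θ δ) : δ ∈ FC L A := by
  refine ⟨θ, ?_, ?_⟩
  · rw [aux_inf_comm]; exact h.1
  · intro a b
    obtain ⟨z, h1, h2⟩ := h.2 b a
    exact ⟨z, δ.symm h2, θ.symm h1⟩

theorem aux_key (hB : IsBooleanSublattice (FC L A)) (θ δ : AlgCon L A)
    (hθ : θ ∈ FC L A) (hδ : δ ∈ FC L A) (a b : A) (h : θ.comp δ a b) :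
    δ.comp θ a b := by
  obtain ⟨δ', hδc⟩ := id hδ
  have hδ'mem : δ' ∈ FC L A := aux_compl_mem hδc
  have dist := hB.2.2.2.2.1 δ' hδ'mem θ hθ δ hδ
  obtain ⟨z, haz, hzb⟩ := hδc.2 a b
  obtain ⟨z₀, h1, h2⟩ := h
  -- z (θ ∨ δ) b
  have hsup : (θ.sup δ).r z b :=
    (θ.sup δ).trans (aux_sup_right θ δ (δ.symm haz))
      ((θ.sup δ).trans (aux_sup_left θ δ h1) (aux_sup_right θ δ h2))
  have h3 : ((δ'.inf θ).sup (δ'.inf δ)).r z b := by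
    rw [← dist]; exact ⟨hzb, hsup⟩
  have hθzb : θ.r z b := by
    refine aux_sup_elim (c := δ'.inf θ) (d := δ'.inf δ) (e := θ) (fun x y hxy => hxy.2) (fun x y hxy => ?_) h3
    have h4 : (δ.inf δ').r x y := ⟨hxy.2, hxy.1⟩
    rw [hδc.1] at h4
    exact h4 ▸ θ.refl x
  exact ⟨z, haz, hθzb⟩

end Aux

/-- In a variety with 0⃗ and 1⃗ having BFC, any two factor
congruences of an algebra permute. -/
theorem statement8 (L : FirstOrder.Language.{0, 0}) [L.IsAlgebraic]
    [Finite (Σ n, L.Functions n)]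
    (E : Set (Identity L)) (Z : ZeroOneData L)
    (hsep : ZeroOneData.Separates.{u} Z E) (hbfc : HasBFC.{u} E)
    (A : Type u) [L.Structure A] (hA : InVariety E A) :
    ∀ θ ∈ FC L A, ∀ δ ∈ FC L A, ∀ a b : A, θ.comp δ a b ↔ δ.comp θ a b := by
  have hB := hbfc A hA
  intro θ hθ δ hδ a b
  exact ⟨aux_key hB θ δ hθ hδ a b, aux_key hB δ θ hδ hθ a b⟩
end

section
/- Let V be a variety with right existentially definable factor congruences (RexDFC) that is stable by complements. Let A, B ∈ V, f: A → B a homomorphism, and e⃗₁ ⋄_A e⃗₂ a pair of complementary central elements of A. Then θ^B(1⃗,f(e⃗₂)) and θ^B(1⃗,f(e⃗₁)) are complementary factor congruences of B; consequently the canonical quotient maps exhibit B as a product B ≅ B/θ^B(1⃗,f(e⃗₂)) × B/θ^B(1⃗,f(e⃗₁)), i.e. binary direct product decompositions in V are stable under pushout along homomorphisms. -/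
open FirstOrder FirstOrder.Language FirstOrder.Language.Structure

universe u v w

open Paper

section AuxStatement15

open Paper

namespace Paper15

variable {L : FirstOrder.Language.{0, 0}}

theorem closed_map {A : Type*} {B : Type*} [L.Structure A] [L.Structure B]
    {F : Type*} [FunLike F A B] [L.HomClass F A B] (g : F) (t : L.Term Empty) :
    g (t.realize Empty.elim) = t.realize Empty.elim := by
  rw [show (Empty.elim : Empty → B) = ⇑g ∘ Empty.elim from funext fun x => x.elim,
    HomClass.realize_term]

theorem prod_term_realize {A B : Type u} [L.Structure A] [L.Structure B] {α : Type*}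
    (t : L.Term α) (v : α → A × B) :
    t.realize v = (t.realize (fun i => (v i).1), t.realize (fun i => (v i).2)) := by
  induction t with
  | var => rfl
  | func f ts ih =>
    show funMap f (fun i => (ts i).realize v) = _
    simp only [Term.realize, ih]
    rfl

theorem closed_prod {A B : Type u} [L.Structure A] [L.Structure B] (t : L.Term Empty) :
    (t.realize (M := A × B) Empty.elim) = (t.realize Empty.elim, t.realize Empty.elim) := by
  rw [prod_term_realize]
  congr 1 <;> (congr 1; funext x; exact x.elim)

theorem oneA_prod (Z : ZeroOneData L) (A B : Type u) [L.Structure A] [L.Structure B] (i : Fin Z.n) :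
    Z.oneA (A × B) i = (Z.oneA A i, Z.oneA B i) := closed_prod _

theorem thetaPairs_le {A : Type*} [L.Structure A] {n : ℕ} {a b : Fin n → A} {c : AlgCon L A}
    (h : ∀ i, c.r (a i) (b i)) {x y : A} (hx : (thetaPairs (L := L) a b).r x y) : c.r x y :=
  hx c (by rintro u w ⟨i, rfl, rfl⟩; exact h i)

theorem thetaPairs_gen {A : Type*} [L.Structure A] {n : ℕ} (a b : Fin n → A) (i : Fin n) :
    (thetaPairs (L := L) a b).r (a i) (b i) :=
  fun c hc => hc _ _ ⟨i, rfl, rfl⟩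

theorem inVariety_prod {E : Set (Identity L)} {A B : Type u} [L.Structure A] [L.Structure B]
    (hA : InVariety E A) (hB : InVariety E B) : InVariety E (A × B) := by
  intro e he v
  rw [prod_term_realize, prod_term_realize]
  exact congrArg₂ Prod.mk (hA e he _) (hB e he _)

theorem inVariety_quot {E : Set (Identity L)} {B : Type u} [L.Structure B]
    (hB : InVariety E B) (c : AlgCon L B) : InVariety E (ConQuot c) := by
  intro e he v
  set u : Fin e.nvars → B := fun i => Quotient.out (α := B) (s := c.setoid) (v i) with hu
  have hv : v = ⇑(conQuotMk c) ∘ u := by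
    funext i
    exact (Quotient.out_eq (s := c.setoid) (v i)).symm
  calc e.lhs.realize v = e.lhs.realize (⇑(conQuotMk c) ∘ u) := by rw [← hv]
    _ = conQuotMk c (e.lhs.realize u) := HomClass.realize_term _
    _ = conQuotMk c (e.rhs.realize u) := congrArg _ (hB e he u)
    _ = e.rhs.realize (⇑(conQuotMk c) ∘ u) := (HomClass.realize_term _).symm
    _ = e.rhs.realize v := by rw [← hv]

/-- Pullback of first-coordinate equality along an isomorphism onto a product. -/
def fstKer {B : Type*} {A₁ A₂ : Type u} [L.Structure B] [L.Structure A₁] [L.Structure A₂]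
    (τ : B ≃[L] A₁ × A₂) : AlgCon L B where
  r x y := (τ x).1 = (τ y).1
  refl _ := rfl
  symm h := h.symm
  trans h1 h2 := h1.trans h2
  compat f x y h := by
    show (τ (funMap f x)).1 = (τ (funMap f y)).1
    rw [HomClass.map_fun τ f x, HomClass.map_fun τ f y]
    show funMap f (fun i => (τ (x i)).1) = funMap f (fun i => (τ (y i)).1)
    congr 1
    funext i
    exact h i

/-- Pullback of second-coordinate equality along an isomorphism onto a product. -/
def sndKer {B : Type*} {A₁ A₂ : Type u} [L.Structure B] [L.Structure A₁] [L.Structure A₂]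
    (τ : B ≃[L] A₁ × A₂) : AlgCon L B where
  r x y := (τ x).2 = (τ y).2
  refl _ := rfl
  symm h := h.symm
  trans h1 h2 := h1.trans h2
  compat f x y h := by
    show (τ (funMap f x)).2 = (τ (funMap f y)).2
    rw [HomClass.map_fun τ f x, HomClass.map_fun τ f y]
    show funMap f (fun i => (τ (x i)).2) = funMap f (fun i => (τ (y i)).2)
    congr 1
    funext i
    exact h i

/-- The swap isomorphism between `A × B` and `B × A`. -/
def prodSwapEquiv (A B : Type u) [L.Structure A] [L.Structure B] : (A × B) ≃[L] (B × A) where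
  toEquiv := Equiv.prodComm A B
  map_fun' _ _ := rfl
  map_rel' _ _ := ⟨fun h => ⟨h.2, h.1⟩, fun h => ⟨h.2, h.1⟩⟩

/-- The key inclusion: if the first coordinates of `τ x` and `τ y` agree, then
`(x, y) ∈ θ(1⃗, e⃗)` where `τ e⃗ = [1⃗, 0⃗]`.  Uses the existential formula. -/
theorem key_incl [L.IsAlgebraic] (E : Set (Identity L)) (Z : ZeroOneData L)
    (φ : L.Formula ((Fin Z.n) ⊕ (Fin 2))) (hex : IsExistentialForm φ)
    (hworks : RightFormulaWorks.{u} E Z φ)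
    {B B₁ B₂ : Type u} [L.Structure B] [L.Structure B₁] [L.Structure B₂]
    (hB : InVariety E B) (h₁ : InVariety E B₁) (h₂ : InVariety E B₂)
    (τ : B ≃[L] B₁ × B₂) (e : Fin Z.n → B)
    (he : ∀ i, τ (e i) = (Z.oneA B₁ i, Z.zeroA B₂ i))
    {x y : B} (hxy : (τ x).1 = (τ y).1) :
    (thetaPairs (L := L) (Z.oneA B) e).r x y := by
  classical
  set θ : AlgCon L B := thetaPairs (L := L) (Z.oneA B) e with hθdef
  set v : (Fin Z.n ⊕ Fin 2) → B := Sum.elim e ![x, y] with hvdef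
  -- Step A : φ is realized in B at (e⃗, x, y)
  have hv1 : φ.Realize (M := B₂ × B₁)
      (Sum.elim (fun i => (Z.zeroA B₂ i, Z.oneA B₁ i))
        ![((τ x).2, (τ x).1), ((τ y).2, (τ y).1)]) :=
    (hworks B₂ B₁ h₂ h₁ (τ x).2 (τ y).2 (τ x).1 (τ y).1).mpr hxy
  have hveq : (⇑(prodSwapEquiv (L := L) B₁ B₂) ∘ (⇑τ ∘ v)) =
      (Sum.elim (fun i => (Z.zeroA B₂ i, Z.oneA B₁ i))
        ![((τ x).2, (τ x).1), ((τ y).2, (τ y).1)]) := by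
    funext s
    rcases s with i | i
    · show Prod.swap (τ (e i)) = _
      rw [he i]
      rfl
    · fin_cases i <;> rfl
  have hvB : φ.Realize (M := B) v := by
    apply (StrongHomClass.realize_formula τ (φ := φ) (v := v)).mp
    apply (StrongHomClass.realize_formula (prodSwapEquiv (L := L) B₁ B₂) (φ := φ) (v := ⇑τ ∘ v)).mp
    rw [hveq]
    exact hv1
  -- the quotient B/θ and the embedding of B into B₂ × (B₁ × B/θ)
  have hQ : InVariety E (ConQuot θ) := inVariety_quot hB θ
  have hP : InVariety E (B₁ × ConQuot θ) := inVariety_prod h₁ hQ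
  let g : B ↪[L] (B₂ × (B₁ × ConQuot θ)) :=
    { toFun := fun z => ((τ z).2, ((τ z).1, ConQuot.mk θ z))
      inj' := by
        intro z w hzw
        apply τ.injective
        exact Prod.ext (congrArg (fun p => p.2.1) hzw) (congrArg Prod.fst hzw)
      map_fun' := by
        intro m fn xs
        show ((τ (funMap fn xs)).2, ((τ (funMap fn xs)).1, ConQuot.mk θ (funMap fn xs))) = _
        rw [HomClass.map_fun τ fn xs, ← conQuot_funMap_mk θ fn xs]
        rfl
      map_rel' := by
        intro m r xs
        exact isEmptyElim r }
  obtain ⟨m, ψ, hqf, hφ⟩ := hex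
  subst hφ
  rw [BoundedFormula.realize_exs] at hvB
  obtain ⟨xs, hxs⟩ := hvB
  have hC : (ψ.exs).Realize (M := B₂ × (B₁ × ConQuot θ)) (⇑g ∘ v) :=
    BoundedFormula.realize_exs.mpr ⟨⇑g ∘ xs, (hqf.realize_embedding g).mpr hxs⟩
  have hgeq : (⇑g ∘ v) =
      Sum.elim (fun i => (Z.zeroA B₂ i, Z.oneA (B₁ × ConQuot θ) i))
        ![((τ x).2, ((τ x).1, ConQuot.mk θ x)), ((τ y).2, ((τ y).1, ConQuot.mk θ y))] := by
    funext s
    rcases s with i | i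
    · show ((τ (e i)).2, ((τ (e i)).1, ConQuot.mk θ (e i))) =
        (Z.zeroA B₂ i, Z.oneA (B₁ × ConQuot θ) i)
      rw [he i, oneA_prod]
      have hm : ConQuot.mk θ (e i) = Z.oneA (ConQuot θ) i := by
        have hg1 : ConQuot.mk θ (Z.oneA B i) = ConQuot.mk θ (e i) :=
          Quotient.sound (thetaPairs_gen (Z.oneA B) e i)
        have hg2 : ConQuot.mk θ (Z.oneA B i) = Z.oneA (ConQuot θ) i :=
          closed_map (conQuotMk θ) _
        rw [← hg1, hg2]
      rw [hm]
    · fin_cases i <;> rfl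
  rw [hgeq] at hC
  have hfin := (hworks B₂ (B₁ × ConQuot θ) h₂ hP (τ x).2 (τ y).2
      ((τ x).1, ConQuot.mk θ x) ((τ y).1, ConQuot.mk θ y)).mp hC
  exact Quotient.exact (congrArg Prod.snd hfin)

end Paper15

end AuxStatement15



/-- in a variety with RexDFC stable by complements, pushing a
binary product decomposition forward along a homomorphism again yields a
product decomposition: the congruences θ^B(1⃗, f(e⃗₂)) and θ^B(1⃗, f(e⃗₁)) are
complementary factor congruences and B is isomorphic, via the canonical
quotient maps, to the product of the two quotients. -/
theorem statement15 (L : FirstOrder.Language.{0, 0}) [L.IsAlgebraic]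
    [Finite (Σ n, L.Functions n)]
    (E : Set (Identity L)) (Z : ZeroOneData L)
    (hsep : ZeroOneData.Separates.{u} Z E) (hrex : HasRexDFC.{u} E Z)
    (hstable : StableByComplements.{u} E Z)
    (A B : Type u) [L.Structure A] [L.Structure B]
    (hA : InVariety E A) (hB : InVariety E B) (f : A →[L] B)
    (e₁ e₂ : Fin Z.n → A) (h : CentDiamond E Z A e₁ e₂) :
    IsComplFC (thetaPairs (L := L) (Z.oneA B) (fun i => f (e₂ i)))
      (thetaPairs (L := L) (Z.oneA B) (fun i => f (e₁ i))) ∧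
    ∃ iso : B ≃[L] (ConQuot (thetaPairs (L := L) (Z.oneA B) (fun i => f (e₂ i))) ×
        ConQuot (thetaPairs (L := L) (Z.oneA B) (fun i => f (e₁ i)))),
      ∀ b : B, iso b =
        (ConQuot.mk (thetaPairs (L := L) (Z.oneA B) (fun i => f (e₂ i))) b,
         ConQuot.mk (thetaPairs (L := L) (Z.oneA B) (fun i => f (e₁ i))) b) := by
  classical
  obtain ⟨hbfc, φ, hex, hworks⟩ := hrex
  obtain ⟨W⟩ := hstable A B hA hB f e₁ e₂ h
  letI : L.Structure W.A₁ := W.s₁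
  letI : L.Structure W.A₂ := W.s₂
  set τ : B ≃[L] (W.A₁ × W.A₂) := W.iso with hτdef
  set θ : AlgCon L B := thetaPairs (L := L) (Z.oneA B) (fun i => f (e₂ i)) with hθdef
  set δ : AlgCon L B := thetaPairs (L := L) (Z.oneA B) (fun i => f (e₁ i)) with hδdef
  have hone : ∀ i, τ (Z.oneA B i) = (Z.oneA W.A₁ i, Z.oneA W.A₂ i) := by
    intro i
    have h1 : τ (Z.oneA B i) = Z.oneA (W.A₁ × W.A₂) i := Paper15.closed_map τ _
    rw [h1, Paper15.oneA_prod]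
  -- θ is exactly "equal first coordinates"
  have hθ1 : ∀ x y : B, θ.r x y → (τ x).1 = (τ y).1 := by
    intro x y hxy
    refine Paper15.thetaPairs_le (c := Paper15.fstKer τ) ?_ hxy
    intro i
    show (τ (Z.oneA B i)).1 = (τ (f (e₂ i))).1
    rw [hone i, W.hf i]
  have hθ2 : ∀ x y : B, (τ x).1 = (τ y).1 → θ.r x y := by
    intro x y hxy
    exact Paper15.key_incl E Z φ hex hworks hB W.mem₁ W.mem₂ τ
      (fun i => f (e₂ i)) W.hf hxy
  -- δ is exactly "equal second coordinates"
  have hδ1 : ∀ x y : B, δ.r x y → (τ x).2 = (τ y).2 := by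
    intro x y hxy
    refine Paper15.thetaPairs_le (c := Paper15.sndKer τ) ?_ hxy
    intro i
    show (τ (Z.oneA B i)).2 = (τ (f (e₁ i))).2
    rw [hone i, W.he i]
  have hδ2 : ∀ x y : B, (τ x).2 = (τ y).2 → δ.r x y := by
    intro x y hxy
    refine Paper15.key_incl E Z φ hex hworks hB W.mem₂ W.mem₁
      ((Paper15.prodSwapEquiv W.A₁ W.A₂).comp τ) (fun i => f (e₁ i)) ?_ ?_
    · intro i
      show Prod.swap (τ (f (e₁ i))) = _
      rw [W.he i]
      rfl
    · exact hxy
  have hcompl : IsComplFC θ δ := by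
    constructor
    · apply AlgCon.ext'
      intro a b
      constructor
      · rintro ⟨hab1, hab2⟩
        show a = b
        apply τ.injective
        exact Prod.ext (hθ1 a b hab1) (hδ1 a b hab2)
      · intro hab
        cases hab
        exact ⟨θ.refl a, δ.refl a⟩
    · intro a b
      refine ⟨τ.symm ((τ a).1, (τ b).2), ?_, ?_⟩
      · apply hθ2
        rw [FirstOrder.Language.Equiv.apply_symm_apply]
      · apply hδ2
        rw [FirstOrder.Language.Equiv.apply_symm_apply]
  refine ⟨hcompl, ?_⟩
  have hbij : Function.Bijective (fun b : B => (ConQuot.mk θ b, ConQuot.mk δ b)) := by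
    constructor
    · intro a b hab
      apply τ.injective
      refine Prod.ext (hθ1 a b ?_) (hδ1 a b ?_)
      · exact Quotient.exact (congrArg Prod.fst hab)
      · exact Quotient.exact (congrArg Prod.snd hab)
    · rintro ⟨u, w⟩
      set a : B := Quotient.out (α := B) (s := θ.setoid) u with hadef
      set b : B := Quotient.out (α := B) (s := δ.setoid) w with hbdef
      refine ⟨τ.symm ((τ a).1, (τ b).2), ?_⟩
      have h1 : ConQuot.mk θ (τ.symm ((τ a).1, (τ b).2)) = u := by
        have : ConQuot.mk θ (τ.symm ((τ a).1, (τ b).2)) = ConQuot.mk θ a := by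
          apply Quotient.sound
          apply hθ2
          rw [FirstOrder.Language.Equiv.apply_symm_apply]
        rw [this]
        exact Quotient.out_eq (s := θ.setoid) u
      have h2 : ConQuot.mk δ (τ.symm ((τ a).1, (τ b).2)) = w := by
        have : ConQuot.mk δ (τ.symm ((τ a).1, (τ b).2)) = ConQuot.mk δ b := by
          apply Quotient.sound
          apply hδ2
          rw [FirstOrder.Language.Equiv.apply_symm_apply]
        rw [this]
        exact Quotient.out_eq (s := δ.setoid) w
      exact Prod.ext h1 h2
  refine ⟨{ toEquiv := Equiv.ofBijective _ hbij
            map_fun' := ?_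
            map_rel' := ?_ }, fun b => rfl⟩
  · intro m fn xs
    show ((ConQuot.mk θ (funMap fn xs), ConQuot.mk δ (funMap fn xs)) : ConQuot θ × ConQuot δ) =
      (funMap fn (fun i => ConQuot.mk θ (xs i)), funMap fn (fun i => ConQuot.mk δ (xs i)))
    rw [conQuot_funMap_mk θ fn xs, conQuot_funMap_mk δ fn xs]
  · intro m r xs
    exact isEmptyElim r
end

section
/- Let V be a variety with 0⃗ and 1⃗ and let A, B, C ∈ V. If u: A → C and v: B → C are homomorphisms such that u ∘ π₁ = v ∘ π₂ as maps A×B → C (where π₁, π₂ are the product projections), then C is trivial, i.e. C has exactly one element. Consequently, the pushout of the two projections A ← A×B → B in V is the terminal (one-element) algebra. -/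
open FirstOrder FirstOrder.Language FirstOrder.Language.Structure

universe u v w

open Paper


/-- in a variety with 0⃗ and 1⃗, if `u ∘ π₁ = v ∘ π₂` for
homomorphisms `u : A → C`, `v : B → C` with `A, B, C ∈ V`, then C is trivial;
hence the pushout of the two product projections is the terminal algebra. -/
theorem statement17 (L : FirstOrder.Language.{0, 0}) [L.IsAlgebraic]
    [Finite (Σ n, L.Functions n)]
    (E : Set (Identity L)) (Z : ZeroOneData L)
    (hsep : ZeroOneData.Separates.{u} Z E)
    (A B C : Type u) [L.Structure A] [L.Structure B] [L.Structure C]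
    (hA : InVariety E A) (hB : InVariety E B) (hC : InVariety E C)
    (u0 : A →[L] C) (v0 : B →[L] C)
    (h : ∀ p : A × B, u0 p.1 = v0 p.2) :
    Nonempty C ∧ Subsingleton C := by
  refine ⟨⟨Z.zeroA C ⟨0, Z.npos⟩⟩, hsep C hC ?_⟩
  intro i
  have h1 : u0 (Z.zeroA A i) = Z.zeroA C i := by
    refine ((HomClass.realize_term (g := u0) (v := (Empty.elim : Empty → A)) (t := Z.zero i)).symm).trans ?_
    congr 1; funext x; exact x.elim
  have h2 : v0 (Z.oneA B i) = Z.oneA C i := by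
    refine ((HomClass.realize_term (g := v0) (v := (Empty.elim : Empty → B)) (t := Z.one i)).symm).trans ?_
    congr 1; funext x; exact x.elim
  rw [← h1, ← h2]
  exact h (Z.zeroA A i, Z.oneA B i)
end
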